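/- arXiv:2102.12357 — 2 statements merged into one kernel-verified Lean document; each statement's English description precedes it below -/
import Mathlib

section
/- Let L > 0, α > 0 and ξ > 0 be real numbers. Then ∫_ξ^∞ h^{L−1} e^{−h} · ( ∫_0^ξ (1 − x/h)^{−1/3} x^{2/α − 1} dx ) dh ≤ B(2/3, 2/α) · ξ^{2/α} · Γ(L, ξ), where B(a, b) = ∫_0^1 t^{a−1} (1 − t)^{b−1} dt is the Beta function and Γ(s, x) = ∫_x^∞ t^{s−1} e^{−t} dt is the upper incomplete Gamma function. -/
/-! For `h ≥ ξ` and `0 ≤ x < ξ` we have `(1 - x/h)^(-1/3) ≤ (1 - x/ξ)^(-1/3)`, so the inner integral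
is dominated, uniformly in `h`, by `∫₀^ξ (1 - x/ξ)^(-1/3) x^(2/α - 1) dx`, which the substitution
`x = ξ (1 - t)` turns into `B(2/3, 2/α) ξ^(2/α)`. What remains of the outer integral is `Γ(L, ξ)`. -/

open Real MeasureTheory

/-- The real Beta function `B(a, b) = ∫_0^1 t^{a−1}(1−t)^{b−1} dt`. -/
noncomputable def betaFun (a b : ℝ) : ℝ :=
  ∫ t in (0:ℝ)..1, t ^ (a - 1) * (1 - t) ^ (b - 1)

/-- The upper incomplete Gamma function `Γ(s, x) = ∫_x^∞ t^{s−1} e^{−t} dt`. -/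
noncomputable def upperIncompleteGamma (s x : ℝ) : ℝ :=
  ∫ t in Set.Ioi x, t ^ (s - 1) * Real.exp (-t)

open Set

lemma integrableOn_rpow_mul_one_sub_rpow {a b : ℝ} (ha : 0 < a) (hb : 0 < b) :
    IntegrableOn (fun t : ℝ => t ^ (a - 1) * (1 - t) ^ (b - 1)) (Ioc 0 1) := by
  have hc := Complex.betaIntegral_convergent (u := a) (v := b) (by simpa) (by simpa)
  rw [intervalIntegrable_iff_integrableOn_Ioc_of_le zero_le_one] at hc
  refine IntegrableOn.congr_fun hc.re (fun t ht => ?_) measurableSet_Ioc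
  have hcast (r : ℝ) : (r : ℂ) - 1 = ((r - 1 : ℝ) : ℂ) := by push_cast; rfl
  have h1 : (1 : ℂ) - t = ((1 - t : ℝ) : ℂ) := by push_cast; rfl
  rw [hcast a, hcast b, h1, ← Complex.ofReal_cpow ht.1.le,
    ← Complex.ofReal_cpow (sub_nonneg.2 ht.2), ← Complex.ofReal_mul, RCLike.re_to_complex,
    Complex.ofReal_re]

lemma one_sub_div_rpow_le_one_sub_div_rpow {x ξ h s : ℝ} (hs : s ≤ 0) (hx : 0 ≤ x)
    (hxξ : x < ξ) (hξh : ξ ≤ h) : (1 - x / h) ^ s ≤ (1 - x / ξ) ^ s := by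
  have hξ : 0 < ξ := hx.trans_lt hxξ
  refine rpow_le_rpow_of_nonpos (sub_pos.2 ((div_lt_one hξ).2 hxξ)) ?_ hs
  gcongr

lemma setIntegral_mul_le_setIntegral_mul_const {α : Type*} [MeasurableSpace α] {μ : Measure α}
    {s : Set α} {w f : α → ℝ} {C : ℝ} (hs : MeasurableSet s) (hw : IntegrableOn w s μ)
    (hw0 : ∀ x ∈ s, 0 ≤ w x) (hf0 : ∀ x ∈ s, 0 ≤ f x) (hfC : ∀ x ∈ s, f x ≤ C) :
    ∫ x in s, w x * f x ∂μ ≤ (∫ x in s, w x ∂μ) * C := by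
  rw [← integral_mul_const]
  refine integral_mono_of_nonneg ?_ (hw.mul_const C) ?_
  · exact ae_restrict_of_forall_mem hs fun x hx => mul_nonneg (hw0 x hx) (hf0 x hx)
  · exact ae_restrict_of_forall_mem hs fun x hx => mul_le_mul_of_nonneg_left (hfC x hx) (hw0 x hx)

lemma integral_one_sub_div_rpow_mul_rpow_le {a b ξ h : ℝ} (ha : 0 < a) (hb : 0 < b)
    (hb1 : b ≤ 1) (hξ : 0 < ξ) (hξh : ξ ≤ h) :
    ∫ x in (0:ℝ)..ξ, (1 - x / h) ^ (b - 1) * x ^ (a - 1) ≤ betaFun b a * ξ ^ a := by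
  have hsub : ∫ x in (0:ℝ)..ξ, (1 - x / h) ^ (b - 1) * x ^ (a - 1) =
      ξ * ∫ t in (0:ℝ)..1, (1 - (ξ - ξ * t) / h) ^ (b - 1) * (ξ - ξ * t) ^ (a - 1) := by
    rw [intervalIntegral.integral_comp_sub_mul (fun x => (1 - x / h) ^ (b - 1) * x ^ (a - 1))
      hξ.ne', smul_eq_mul, mul_inv_cancel_left₀ hξ.ne']
    simp
  have hbeta : betaFun b a * ξ ^ a =
      ξ * ∫ t in (0:ℝ)..1, ξ ^ (a - 1) * (t ^ (b - 1) * (1 - t) ^ (a - 1)) := by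
    rw [intervalIntegral.integral_const_mul, betaFun, rpow_sub_one hξ.ne']
    field_simp
  rw [hsub, hbeta, intervalIntegral.integral_of_le zero_le_one,
    intervalIntegral.integral_of_le zero_le_one, ← restrict_Ioo_eq_restrict_Ioc]
  have hbase : ∀ t ∈ Ioo (0:ℝ) 1, 0 < ξ - ξ * t ∧ ξ - ξ * t < ξ ∧ 1 - (ξ - ξ * t) / ξ = t :=
    fun t ht => ⟨by nlinarith [ht.2], by nlinarith [ht.1], by field_simp; ring⟩
  refine mul_le_mul_of_nonneg_left (integral_mono_of_nonneg ?_ ?_ ?_) hξ.le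
  · refine ae_restrict_of_forall_mem measurableSet_Ioo fun t ht => ?_
    obtain ⟨hx0, hxξ, -⟩ := hbase t ht
    have : 0 ≤ 1 - (ξ - ξ * t) / h := by
      rw [sub_nonneg, div_le_one (hξ.trans_le hξh)]
      linarith
    positivity
  · exact IntegrableOn.mono_set ((integrableOn_rpow_mul_one_sub_rpow hb ha).const_mul _)
      Ioo_subset_Ioc_self
  · refine ae_restrict_of_forall_mem measurableSet_Ioo fun t ht => ?_
    obtain ⟨hx0, hxξ, hx⟩ := hbase t ht
    calc (1 - (ξ - ξ * t) / h) ^ (b - 1) * (ξ - ξ * t) ^ (a - 1)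
        ≤ (1 - (ξ - ξ * t) / ξ) ^ (b - 1) * (ξ - ξ * t) ^ (a - 1) := by
          gcongr ?_ * _
          exact one_sub_div_rpow_le_one_sub_div_rpow (by linarith) hx0.le hxξ hξh
      _ = ξ ^ (a - 1) * (t ^ (b - 1) * (1 - t) ^ (a - 1)) := by
          rw [hx, ← mul_one_sub, mul_rpow hξ.le (sub_nonneg.2 ht.2.le)]
          ring

/-- Upper bound on term (c2) in the proof of Lemma 5:
`∫_ξ^∞ h^{L−1} e^{−h} (∫_0^ξ (1 − x/h)^{−1/3} x^{2/α−1} dx) dh ≤ B(2/3, 2/α)·ξ^{2/α}·Γ(L, ξ)`. -/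
theorem integral_term_c2_bound (L α ξ : ℝ) (hL : 0 < L) (hα : 0 < α) (hξ : 0 < ξ) :
    (∫ h in Set.Ioi ξ, h ^ (L - 1) * Real.exp (-h) *
        ∫ x in (0:ℝ)..ξ, (1 - x / h) ^ (-(1 / 3 : ℝ)) * x ^ (2 / α - 1)) ≤
      betaFun (2 / 3) (2 / α) * ξ ^ (2 / α) * upperIncompleteGamma L ξ := by
  have hexp : (2 / 3 : ℝ) - 1 = -(1 / 3) := by norm_num
  have hinner (h : ℝ) (hh : h ∈ Ioi ξ) :
      ∫ x in (0:ℝ)..ξ, (1 - x / h) ^ (-(1 / 3 : ℝ)) * x ^ (2 / α - 1) ≤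
        betaFun (2 / 3) (2 / α) * ξ ^ (2 / α) := by
    simpa only [hexp] using integral_one_sub_div_rpow_mul_rpow_le (by positivity)
      (by norm_num : (0:ℝ) < 2 / 3) (by norm_num) hξ (le_of_lt hh)
  have hinner_nonneg (h : ℝ) (hh : h ∈ Ioi ξ) :
      0 ≤ ∫ x in (0:ℝ)..ξ, (1 - x / h) ^ (-(1 / 3 : ℝ)) * x ^ (2 / α - 1) := by
    refine intervalIntegral.integral_nonneg hξ.le fun x hx => ?_
    have : 0 ≤ 1 - x / h := by
      rw [sub_nonneg, div_le_one (hξ.trans hh)]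
      exact hx.2.trans (le_of_lt hh)
    have := hx.1
    positivity
  have hgamma : IntegrableOn (fun h : ℝ => h ^ (L - 1) * exp (-h)) (Ioi ξ) :=
    ((GammaIntegral_convergent hL).mono_set (Ioi_subset_Ioi hξ.le)).congr_fun
      (fun _ _ => mul_comm _ _) measurableSet_Ioi
  calc _ ≤ (∫ h in Ioi ξ, h ^ (L - 1) * exp (-h)) * (betaFun (2 / 3) (2 / α) * ξ ^ (2 / α)) :=
        setIntegral_mul_le_setIntegral_mul_const measurableSet_Ioi hgamma
          (fun h hh => by have := hξ.trans hh; positivity) hinner_nonneg hinner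
    _ = _ := by rw [upperIncompleteGamma]; ring
end

section
/- Let L > 0, α > 0, R > 0 and ξ > 0 be real numbers. Then ∫_0^R (2r/R²) · ( ∫_{(r/R)^α ξ}^∞ ( h / (R^α h − r^α ξ) )^{1/3} · h^{L−1} e^{−h} / Γ(L) dh ) dr ≤ (2 B(2/3, 2/α) / (α R^{α/3} Γ(L))) · ( ξ^{−2/α} γ(L + 2/α, ξ) + Γ(L, ξ) ), where B(a, b) = ∫_0^1 t^{a−1}(1−t)^{b−1} dt is the Beta function, γ(s, x) = ∫_0^x t^{s−1}e^{−t} dt the lower incomplete Gamma function, and Γ(s, x) = ∫_x^∞ t^{s−1}e^{−t} dt the upper incomplete Gamma function. -/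
/-!
Every device that is active at gain `h` lies within distance `ρ(h) = R w^{1/α}`,
`w = min (h/ξ) 1`, and there `h/(R^α h − r^α ξ) ≤ w/(ρ^α − r^α)` (with equality for `h ≤ ξ`).
After swapping the integrals, the substitution `r = ρ t^{1/α}` turns the `r`-integral of
`(2r/R²) (w/(ρ^α − r^α))^{1/3}` over `(0, ρ)` into `2 B(2/3, 2/α) w^{2/α} / (α R^{α/3})`;
integrating `w^{2/α} h^{L−1} e^{−h}` over `h`, split at `ξ`, produces the two incomplete Gamma
functions. The estimates are carried out for lower Lebesgue integrals, where neither the bounds nor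
Tonelli's theorem need integrability.
-/

open Real MeasureTheory

/-- The lower incomplete Gamma function `γ(s, x) = ∫_0^x t^{s−1} e^{−t} dt`. -/
noncomputable def lowerIncompleteGamma (s x : ℝ) : ℝ :=
  ∫ t in (0:ℝ)..x, t ^ (s - 1) * Real.exp (-t)

open Set
open scoped ENNReal

theorem ofReal_integral_le_lintegral_ofReal {X : Type*} [MeasurableSpace X] {μ : Measure X}
    (f : X → ℝ) : ENNReal.ofReal (∫ x, f x ∂μ) ≤ ∫⁻ x, ENNReal.ofReal (f x) ∂μ := by
  by_cases hf : Integrable f μ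
  · rw [integral_eq_lintegral_pos_part_sub_lintegral_neg_part hf]
    exact (ENNReal.ofReal_le_ofReal (sub_le_self _ ENNReal.toReal_nonneg)).trans
      ENNReal.ofReal_toReal_le
  · simp [integral_undef hf]

theorem intervalIntegrable_betaIntegrand_left {a : ℝ} (ha : 0 < a) (b : ℝ) :
    IntervalIntegrable (fun t : ℝ => t ^ (a - 1) * (1 - t) ^ (b - 1)) volume 0 (1 / 2) := by
  refine (intervalIntegral.intervalIntegrable_rpow' (by linarith)).mul_continuousOn ?_
  refine ContinuousOn.rpow_const (by fun_prop) fun t ht => Or.inl ?_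
  rw [uIcc_of_le (by norm_num)] at ht
  linarith [ht.2]

theorem intervalIntegrable_betaIntegrand {a b : ℝ} (ha : 0 < a) (hb : 0 < b) :
    IntervalIntegrable (fun t : ℝ => t ^ (a - 1) * (1 - t) ^ (b - 1)) volume 0 1 := by
  refine (intervalIntegrable_betaIntegrand_left ha b).trans ?_
  have := (intervalIntegrable_betaIntegrand_left hb a).comp_sub_left 1
  norm_num at this
  simpa only [mul_comm] using this.symm

theorem betaFun_comm (a b : ℝ) : betaFun a b = betaFun b a := by
  have h := intervalIntegral.integral_comp_sub_left
    (fun t : ℝ => t ^ (b - 1) * (1 - t) ^ (a - 1)) (a := 0) (b := 1) 1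
  norm_num at h
  rw [betaFun, betaFun, ← h]
  simp only [mul_comm]

theorem betaFun_nonneg (a b : ℝ) : 0 ≤ betaFun a b :=
  intervalIntegral.integral_nonneg zero_le_one fun t ht =>
    mul_nonneg (rpow_nonneg ht.1 _) (rpow_nonneg (by linarith [ht.2]) _)

theorem lintegral_Ioo_betaIntegrand {a b : ℝ} (ha : 0 < a) (hb : 0 < b) :
    ∫⁻ t in Ioo 0 1, ENNReal.ofReal (t ^ (a - 1) * (1 - t) ^ (b - 1)) =
      ENNReal.ofReal (betaFun a b) := by
  rw [betaFun, intervalIntegral.integral_of_le zero_le_one, integral_Ioc_eq_integral_Ioo,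
    ofReal_integral_eq_lintegral_ofReal]
  · exact ((intervalIntegrable_iff_integrableOn_Ioo_of_le zero_le_one).1
      (intervalIntegrable_betaIntegrand ha hb))
  · exact ae_restrict_of_forall_mem measurableSet_Ioo fun t ht =>
      mul_nonneg (rpow_nonneg ht.1.le _) (rpow_nonneg (by linarith [ht.2]) _)

theorem lintegral_Ioo_rpow_mul_rpow_sub_rpow {α p q ρ : ℝ} (hα : 0 < α) (hp : 0 < p) (hq : 0 < q)
    (hρ : 0 < ρ) :
    ∫⁻ r in Ioo 0 ρ, ENNReal.ofReal (r ^ (p - 1) * (ρ ^ α - r ^ α) ^ (q - 1)) =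
      ENNReal.ofReal (ρ ^ (p + α * (q - 1)) / α * betaFun (p / α) q) := by
  set φ : ℝ → ℝ := fun t => ρ * t ^ α⁻¹
  have hder : ∀ t ∈ Ioo (0 : ℝ) 1,
      HasDerivWithinAt φ (ρ * (α⁻¹ * t ^ (α⁻¹ - 1))) (Ioo 0 1) t := fun t ht =>
    ((hasDerivAt_rpow_const (Or.inl ht.1.ne')).const_mul ρ).hasDerivWithinAt
  have hφα : ∀ t, 0 ≤ t → φ t ^ α = ρ ^ α * t := fun t ht => by
    rw [mul_rpow hρ.le (rpow_nonneg ht _), rpow_inv_rpow ht hα.ne']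
  have hinj : InjOn φ (Ioo 0 1) := fun s hs t ht hst => by
    simpa [hφα s hs.1.le, hφα t ht.1.le, (rpow_pos_of_pos hρ α).ne'] using congrArg (· ^ α) hst
  have himg : φ '' Ioo 0 1 = Ioo 0 ρ := by
    ext r
    constructor
    · rintro ⟨t, ht, rfl⟩
      exact ⟨by have := ht.1; positivity,
        mul_lt_of_lt_one_right hρ (rpow_lt_one ht.1.le ht.2 (inv_pos.2 hα))⟩
    · rintro ⟨hr0, hrρ⟩
      have hrρ0 : 0 < r / ρ := div_pos hr0 hρ
      refine ⟨(r / ρ) ^ α, ⟨by positivity, rpow_lt_one hrρ0.le ((div_lt_one hρ).2 hrρ) hα⟩, ?_⟩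
      simp only [φ, rpow_rpow_inv hrρ0.le hα.ne']
      field_simp
  rw [← himg, lintegral_image_eq_lintegral_abs_deriv_mul measurableSet_Ioo hder hinj,
    ENNReal.ofReal_mul (by positivity), ← lintegral_Ioo_betaIntegrand (div_pos hp hα) hq,
    ← lintegral_const_mul' _ _ ENNReal.ofReal_ne_top]
  refine setLIntegral_congr_fun measurableSet_Ioo fun t ht => ?_
  have hρp : ρ ^ (p + α * (q - 1)) = ρ * ρ ^ (p - 1) * ρ ^ (α * (q - 1)) := by
    rw [show p + α * (q - 1) = 1 + (p - 1) + α * (q - 1) by ring, rpow_add hρ, rpow_add hρ,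
      rpow_one]
  have htp : t ^ (p / α - 1) = t ^ (α⁻¹ - 1) * t ^ (α⁻¹ * (p - 1)) := by
    rw [← rpow_add ht.1]
    congr 1
    field_simp
    ring
  rw [← ENNReal.ofReal_mul (abs_nonneg _), ← ENNReal.ofReal_mul (by positivity), hφα t ht.1.le,
    abs_of_pos (by have := ht.1; positivity), show ρ ^ α - ρ ^ α * t = ρ ^ α * (1 - t) by ring,
    mul_rpow (rpow_nonneg hρ.le _) (by linarith [ht.2]), ← rpow_mul hρ.le,
    mul_rpow hρ.le (rpow_nonneg ht.1.le _), ← rpow_mul ht.1.le, hρp, htp]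
  congr 1
  field_simp

theorem integrableOn_gammaIntegrand {s : ℝ} (hs : 0 < s) :
    IntegrableOn (fun t : ℝ => t ^ (s - 1) * exp (-t)) (Ioi 0) :=
  (GammaIntegral_convergent hs).congr_fun (fun _ _ => mul_comm _ _) measurableSet_Ioi

theorem lowerIncompleteGamma_nonneg (s : ℝ) {x : ℝ} (hx : 0 ≤ x) :
    0 ≤ lowerIncompleteGamma s x :=
  intervalIntegral.integral_nonneg hx fun _ ht => mul_nonneg (rpow_nonneg ht.1 _) (exp_pos _).le

theorem upperIncompleteGamma_nonneg (s : ℝ) {x : ℝ} (hx : 0 ≤ x) :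
    0 ≤ upperIncompleteGamma s x :=
  setIntegral_nonneg measurableSet_Ioi fun _ ht =>
    mul_nonneg (rpow_nonneg (hx.trans ht.le) _) (exp_pos _).le

theorem lintegral_Ioc_gammaIntegrand {s x : ℝ} (hs : 0 < s) (hx : 0 ≤ x) :
    ∫⁻ t in Ioc 0 x, ENNReal.ofReal (t ^ (s - 1) * exp (-t)) =
      ENNReal.ofReal (lowerIncompleteGamma s x) := by
  rw [lowerIncompleteGamma, intervalIntegral.integral_of_le hx, ofReal_integral_eq_lintegral_ofReal
    ((integrableOn_gammaIntegrand hs).mono_set Ioc_subset_Ioi_self)]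
  exact ae_restrict_of_forall_mem measurableSet_Ioc fun t ht =>
    mul_nonneg (rpow_nonneg ht.1.le _) (exp_pos _).le

theorem lintegral_Ioi_gammaIntegrand {s x : ℝ} (hs : 0 < s) (hx : 0 ≤ x) :
    ∫⁻ t in Ioi x, ENNReal.ofReal (t ^ (s - 1) * exp (-t)) =
      ENNReal.ofReal (upperIncompleteGamma s x) := by
  rw [upperIncompleteGamma, ofReal_integral_eq_lintegral_ofReal
    ((integrableOn_gammaIntegrand hs).mono_set (Ioi_subset_Ioi hx))]
  exact ae_restrict_of_forall_mem measurableSet_Ioi fun t ht =>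
    mul_nonneg (rpow_nonneg (hx.trans ht.le) _) (exp_pos _).le

theorem lintegral_Ioi_min_rpow_mul_gammaIntegrand {s L ξ : ℝ} (hL : 0 < L) (hs : 0 ≤ s)
    (hξ : 0 < ξ) :
    ∫⁻ h in Ioi 0, ENNReal.ofReal (min (h / ξ) 1 ^ s * (h ^ (L - 1) * exp (-h))) =
      ENNReal.ofReal (ξ ^ (-s) * lowerIncompleteGamma (L + s) ξ + upperIncompleteGamma L ξ) := by
  rw [← Ioc_union_Ioi_eq_Ioi hξ.le, lintegral_union measurableSet_Ioi Ioc_disjoint_Ioi_same,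
    ENNReal.ofReal_add (mul_nonneg (rpow_nonneg hξ.le _) (lowerIncompleteGamma_nonneg _ hξ.le))
      (upperIncompleteGamma_nonneg _ hξ.le),
    ENNReal.ofReal_mul (rpow_nonneg hξ.le _), ← lintegral_Ioc_gammaIntegrand (by linarith) hξ.le,
    ← lintegral_Ioi_gammaIntegrand hL hξ.le, ← lintegral_const_mul' _ _ ENNReal.ofReal_ne_top]
  congr 1
  · refine setLIntegral_congr_fun measurableSet_Ioc fun h hh => ?_
    rw [← ENNReal.ofReal_mul (rpow_nonneg hξ.le _), min_eq_left ((div_le_one hξ).2 hh.2),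
      div_rpow hh.1.le hξ.le, rpow_neg hξ.le, show L + s - 1 = s + (L - 1) by ring,
      rpow_add hh.1]
    congr 1
    ring
  · refine setLIntegral_congr_fun measurableSet_Ioi fun h hh => ?_
    rw [min_eq_right ((one_le_div hξ).2 hh.le), one_rpow, one_mul]

theorem lt_mul_min_and_div_sub_le {a b h ξ : ℝ} (hb : 0 < b) (hξ : 0 < ξ) (hba : b < a)
    (hbh : b * ξ < a * h) :
    b < a * min (h / ξ) 1 ∧ h / (a * h - b * ξ) ≤ min (h / ξ) 1 / (a * min (h / ξ) 1 - b) := by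
  have ha : 0 < a := hb.trans hba
  have hbw : b < a * min (h / ξ) 1 := by
    rw [mul_min_of_nonneg _ _ ha.le, lt_min_iff, mul_div_assoc', lt_div_iff₀ hξ, mul_one]
    exact ⟨hbh, hba⟩
  have hwξ : min (h / ξ) 1 * ξ ≤ h := (le_div_iff₀ hξ).1 (min_le_left _ _)
  refine ⟨hbw, (div_le_div_iff₀ (by linarith) (by linarith)).2 ?_⟩
  nlinarith

/-- Every device that is active at channel gain `h` lies within this distance (for `h ≤ ξ`,
exactly the active ones do). -/
noncomputable def activeRadius (α R ξ h : ℝ) : ℝ := R * min (h / ξ) 1 ^ α⁻¹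

noncomputable def deviationMajorant (L α R ξ r h : ℝ) : ℝ≥0∞ :=
  (Ioo 0 (activeRadius α R ξ h)).indicator (fun r => ENNReal.ofReal (2 * r / R ^ 2 *
    ((min (h / ξ) 1 / (R ^ α * min (h / ξ) 1 - r ^ α)) ^ ((1 : ℝ) / 3) *
      (h ^ (L - 1) * exp (-h)) / Gamma L))) r

theorem measurable_deviationMajorant (L α R ξ : ℝ) :
    Measurable (Function.uncurry (deviationMajorant L α R ξ)) := by
  unfold deviationMajorant activeRadius
  simp only [Function.uncurry_def, indicator_apply, mem_Ioo]
  refine Measurable.ite ?_ (by fun_prop) measurable_const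
  exact (measurableSet_lt measurable_const measurable_fst).inter
    (measurableSet_lt measurable_fst (by fun_prop))

section

variable {L α R ξ : ℝ}

theorem activeRadius_rpow {h : ℝ} (hα : α ≠ 0) (hR : 0 ≤ R) (hξ : 0 ≤ ξ) (hh : 0 ≤ h) :
    activeRadius α R ξ h ^ α = R ^ α * min (h / ξ) 1 := by
  have hw : 0 ≤ min (h / ξ) 1 := le_min (div_nonneg hh hξ) zero_le_one
  rw [activeRadius, mul_rpow hR (rpow_nonneg hw _), rpow_inv_rpow hw hα]

theorem ofReal_le_deviationMajorant {r h : ℝ} (hL : 0 < L) (hα : 0 < α) (hR : 0 < R)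
    (hξ : 0 < ξ) (hr : r ∈ Ioo 0 R) (hh : (r / R) ^ α * ξ < h) :
    ENNReal.ofReal (2 * r / R ^ 2 * ((h / (R ^ α * h - r ^ α * ξ)) ^ ((1 : ℝ) / 3) *
      (h ^ (L - 1) * exp (-h)) / Gamma L)) ≤ deviationMajorant L α R ξ r h := by
  obtain ⟨hr0, hrR⟩ := hr
  have hRα : 0 < R ^ α := rpow_pos_of_pos hR α
  have hh0 : 0 < h := lt_trans (by positivity) hh
  have hbh : r ^ α * ξ < R ^ α * h := by
    rwa [div_rpow hr0.le hR.le, div_mul_eq_mul_div, div_lt_iff₀ hRα, mul_comm h] at hh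
  obtain ⟨hlt, hle⟩ := lt_mul_min_and_div_sub_le (rpow_pos_of_pos hr0 α) hξ
    (rpow_lt_rpow hr0.le hrR hα) hbh
  have hrρ : r < activeRadius α R ξ h := by
    rwa [← activeRadius_rpow hα.ne' hR.le hξ.le hh0.le,
      rpow_lt_rpow_iff hr0.le (by unfold activeRadius; positivity) hα] at hlt
  rw [deviationMajorant, indicator_of_mem (show r ∈ Ioo 0 _ from ⟨hr0, hrρ⟩)]
  refine ENNReal.ofReal_le_ofReal ?_
  have := Gamma_pos_of_pos hL
  gcongr

theorem lintegral_deviationMajorant {h : ℝ} (hL : 0 < L) (hα : 0 < α) (hR : 0 < R) (hξ : 0 < ξ)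
    (hh : 0 < h) :
    ∫⁻ r, deviationMajorant L α R ξ r h = ENNReal.ofReal
      (2 * betaFun (2 / 3) (2 / α) / (α * R ^ (α / 3) * Gamma L) *
        (min (h / ξ) 1 ^ (2 / α) * (h ^ (L - 1) * exp (-h)))) := by
  have hw : 0 < min (h / ξ) 1 := lt_min (div_pos hh hξ) one_pos
  have hρα := activeRadius_rpow hα.ne' hR.le hξ.le hh.le
  have hρ : 0 < activeRadius α R ξ h := mul_pos hR (rpow_pos_of_pos hw _)
  have := Gamma_pos_of_pos hL
  unfold deviationMajorant
  rw [lintegral_indicator measurableSet_Ioo]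
  have hsplit : ∀ r ∈ Ioo 0 (activeRadius α R ξ h), ENNReal.ofReal (2 * r / R ^ 2 *
      ((min (h / ξ) 1 / (R ^ α * min (h / ξ) 1 - r ^ α)) ^ ((1 : ℝ) / 3) *
        (h ^ (L - 1) * exp (-h)) / Gamma L)) =
      ENNReal.ofReal (2 / R ^ 2 * min (h / ξ) 1 ^ ((1 : ℝ) / 3) *
          (h ^ (L - 1) * exp (-h) / Gamma L)) *
        ENNReal.ofReal (r ^ ((2 : ℝ) - 1) *
          (activeRadius α R ξ h ^ α - r ^ α) ^ ((2 : ℝ) / 3 - 1)) := by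
    intro r hr
    have hX : 0 < activeRadius α R ξ h ^ α - r ^ α :=
      sub_pos.2 (rpow_lt_rpow hr.1.le hr.2 hα)
    rw [← hρα, div_rpow hw.le hX.le, show (2 : ℝ) / 3 - 1 = -(1 / 3) by norm_num, rpow_neg hX.le,
      show (2 : ℝ) - 1 = 1 by norm_num, rpow_one, ← ENNReal.ofReal_mul (by positivity)]
    congr 1
    ring
  have hR' : R ^ (2 + α * (2 / 3 - 1)) = R ^ 2 / R ^ (α / 3) := by
    rw [show 2 + α * (2 / 3 - 1) = 2 - α / 3 by ring, rpow_sub hR, rpow_two]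
  have hw' : min (h / ξ) 1 ^ ((1 : ℝ) / 3) * min (h / ξ) 1 ^ (α⁻¹ * (2 + α * (2 / 3 - 1))) =
      min (h / ξ) 1 ^ (2 / α) := by
    rw [← rpow_add hw]
    congr 1
    field_simp
    ring
  rw [setLIntegral_congr_fun measurableSet_Ioo hsplit,
    lintegral_const_mul' _ _ ENNReal.ofReal_ne_top,
    lintegral_Ioo_rpow_mul_rpow_sub_rpow hα two_pos (by norm_num) hρ,
    ← ENNReal.ofReal_mul (by positivity), betaFun_comm, activeRadius,
    mul_rpow hR.le (rpow_nonneg hw.le _), ← rpow_mul hw.le, hR', ← hw']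
  congr 1
  field_simp

theorem ofReal_integral_le_lintegral_deviationMajorant (hL : 0 < L) (hα : 0 < α)
    (hR : 0 < R) (hξ : 0 < ξ) :
    ENNReal.ofReal (∫ r in (0:ℝ)..R, (2 * r / R ^ 2) *
        ∫ h in Ioi ((r / R) ^ α * ξ),
          (h / (R ^ α * h - r ^ α * ξ)) ^ ((1 : ℝ) / 3) * (h ^ (L - 1) * exp (-h)) / Gamma L) ≤
      ∫⁻ r in Ioo 0 R, ∫⁻ h in Ioi 0, deviationMajorant L α R ξ r h := by
  rw [intervalIntegral.integral_of_le hR.le, integral_Ioc_eq_integral_Ioo]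
  refine (ofReal_integral_le_lintegral_ofReal _).trans
    (setLIntegral_mono' measurableSet_Ioo fun r hr => ?_)
  have hr0 : 0 ≤ 2 * r / R ^ 2 := by have := hr.1; positivity
  calc ENNReal.ofReal (2 * r / R ^ 2 * ∫ h in Ioi ((r / R) ^ α * ξ),
          (h / (R ^ α * h - r ^ α * ξ)) ^ ((1 : ℝ) / 3) * (h ^ (L - 1) * exp (-h)) / Gamma L)
      ≤ ENNReal.ofReal (2 * r / R ^ 2) * ∫⁻ h in Ioi ((r / R) ^ α * ξ), ENNReal.ofReal
          ((h / (R ^ α * h - r ^ α * ξ)) ^ ((1 : ℝ) / 3) * (h ^ (L - 1) * exp (-h)) / Gamma L) := by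
        rw [ENNReal.ofReal_mul hr0]
        gcongr
        exact ofReal_integral_le_lintegral_ofReal _
    _ ≤ ∫⁻ h in Ioi ((r / R) ^ α * ξ), deviationMajorant L α R ξ r h := by
        rw [← lintegral_const_mul' _ _ ENNReal.ofReal_ne_top]
        refine setLIntegral_mono' measurableSet_Ioi fun h hh => ?_
        rw [← ENNReal.ofReal_mul hr0]
        exact ofReal_le_deviationMajorant hL hα hR hξ hr hh
    _ ≤ ∫⁻ h in Ioi 0, deviationMajorant L α R ξ r h :=
        lintegral_mono_set (Ioi_subset_Ioi (by have := hr.1; positivity))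

end

/-- The integral inequality underlying **Lemma 5** (optimal local gradient deviation):
`∫_0^R (2r/R²) ∫_{(r/R)^α ξ}^∞ (h/(R^α h − r^α ξ))^{1/3} h^{L−1} e^{−h}/Γ(L) dh dr
  ≤ (2 B(2/3, 2/α)/(α R^{α/3} Γ(L))) (ξ^{−2/α} γ(L + 2/α, ξ) + Γ(L, ξ))`. -/
theorem local_gradient_deviation_integral_bound
    (L α R ξ : ℝ) (hL : 0 < L) (hα : 0 < α) (hR : 0 < R) (hξ : 0 < ξ) :
    (∫ r in (0:ℝ)..R, (2 * r / R ^ 2) *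
        ∫ h in Set.Ioi ((r / R) ^ α * ξ),
          (h / (R ^ α * h - r ^ α * ξ)) ^ ((1 : ℝ) / 3) * (h ^ (L - 1) * Real.exp (-h))
            / Real.Gamma L) ≤
      (2 * betaFun (2 / 3) (2 / α) / (α * R ^ (α / 3) * Real.Gamma L)) *
        (ξ ^ (-(2 / α)) * lowerIncompleteGamma (L + 2 / α) ξ + upperIncompleteGamma L ξ) := by
  have hC : 0 ≤ 2 * betaFun (2 / 3) (2 / α) / (α * R ^ (α / 3) * Gamma L) := by
    have := betaFun_nonneg (2 / 3) (2 / α)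
    have := Gamma_pos_of_pos hL
    positivity
  have hG : 0 ≤ ξ ^ (-(2 / α)) * lowerIncompleteGamma (L + 2 / α) ξ + upperIncompleteGamma L ξ :=
    add_nonneg (mul_nonneg (rpow_nonneg hξ.le _) (lowerIncompleteGamma_nonneg _ hξ.le))
      (upperIncompleteGamma_nonneg _ hξ.le)
  rw [← ENNReal.ofReal_le_ofReal_iff (mul_nonneg hC hG)]
  calc _ ≤ ∫⁻ r in Ioo 0 R, ∫⁻ h in Ioi 0, deviationMajorant L α R ξ r h :=
        ofReal_integral_le_lintegral_deviationMajorant hL hα hR hξ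
    _ ≤ ∫⁻ r, ∫⁻ h in Ioi 0, deviationMajorant L α R ξ r h := setLIntegral_le_lintegral _ _
    _ = ∫⁻ h in Ioi 0, ∫⁻ r, deviationMajorant L α R ξ r h :=
        lintegral_lintegral_swap (measurable_deviationMajorant L α R ξ).aemeasurable
    _ = ∫⁻ h in Ioi 0, ENNReal.ofReal (2 * betaFun (2 / 3) (2 / α) / (α * R ^ (α / 3) * Gamma L) *
          (min (h / ξ) 1 ^ (2 / α) * (h ^ (L - 1) * exp (-h)))) :=
        setLIntegral_congr_fun measurableSet_Ioi fun h hh =>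
          lintegral_deviationMajorant hL hα hR hξ hh
    _ = _ := by
        simp_rw [ENNReal.ofReal_mul hC]
        rw [lintegral_const_mul' _ _ ENNReal.ofReal_ne_top,
          lintegral_Ioi_min_rpow_mul_gammaIntegrand hL (by positivity) hξ]
end
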